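/- For every k ≥ 2 and every l with 0 < l ≤ k², there exists a network with 4k vertices and 4k−1+l edges whose eccentricity diagram has Ω(kl) edges; in particular the eccentricity function on each of l designated edges consists of at least 2k−2 linear segments. -/

import Mathlib

open Set

/-- A finite simple undirected network on `n` vertices with positive edge weights. -/
structure WGraph (n : ℕ) where
  adj : Fin n → Fin n → Bool
  symm : ∀ u v, adj u v = adj v u
  loopless : ∀ u, adj u u = false
  w : Fin n → Fin n → ℝ
  wsymm : ∀ u v, w u v = w v u
  wpos : ∀ u v, adj u v = true → 0 < w u v

variable {n : ℕ}

def WGraph.toSimple (G : WGraph n) : SimpleGraph (Fin n) where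
  Adj u v := G.adj u v = true
  symm := ⟨fun u v h => by show G.adj v u = true; rw [G.symm]; exact h⟩
  loopless := ⟨fun u (h : G.adj u u = true) => by simp [G.loopless u] at h⟩

instance (G : WGraph n) : DecidableRel G.toSimple.Adj :=
  fun u v => inferInstanceAs (Decidable (G.adj u v = true))

/-- Total weight of a walk. -/
noncomputable def WGraph.walkWeight (G : WGraph n) {u v : Fin n}
    (p : G.toSimple.Walk u v) : ℝ :=
  (p.darts.map fun d => G.w d.toProd.1 d.toProd.2).sum

/-- Weighted shortest-path distance between vertices. -/
noncomputable def WGraph.vdist (G : WGraph n) (u v : Fin n) : ℝ :=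
  sInf {x | ∃ p : G.toSimple.Walk u v, x = G.walkWeight p}

/-- Network distance between the point at parameter `a` on edge `uv` and the point at
parameter `b` on edge `st`: the minimum over routes through the endpoints, together with
the direct route along the edge when the two edges coincide. -/
noncomputable def WGraph.pdist (G : WGraph n) (u v : Fin n) (a : ℝ) (s t : Fin n) (b : ℝ) : ℝ :=
  let base := min
    (min (a * G.w u v + G.vdist u s + b * G.w s t)
         (a * G.w u v + G.vdist u t + (1 - b) * G.w s t))
    (min ((1 - a) * G.w u v + G.vdist v s + b * G.w s t)
         ((1 - a) * G.w u v + G.vdist v t + (1 - b) * G.w s t))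
  if u = s ∧ v = t then min (|a - b| * G.w u v) base
  else if u = t ∧ v = s then min (|a - (1 - b)| * G.w u v) base
  else base

/-- Eccentricity of the point at parameter `a` on edge `uv`: the largest network distance
to any point of the network. -/
noncomputable def WGraph.eccOn (G : WGraph n) (u v : Fin n) (a : ℝ) : ℝ :=
  sSup {x | ∃ s t, G.adj s t = true ∧ ∃ b ∈ Icc (0:ℝ) 1, x = G.pdist u v a s t b}

/-- A point of the network: an (oriented) edge together with a parameter in `[0,1]`. -/
abbrev NetPt (n : ℕ) := (Fin n × Fin n) × ℝ

def WGraph.validPt (G : WGraph n) (p : NetPt n) : Prop :=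
  G.adj p.1.1 p.1.2 = true ∧ p.2 ∈ Icc (0:ℝ) 1

noncomputable def WGraph.pdistPt (G : WGraph n) (p q : NetPt n) : ℝ :=
  G.pdist p.1.1 p.1.2 p.2 q.1.1 q.1.2 q.2

noncomputable def WGraph.eccPt (G : WGraph n) (p : NetPt n) : ℝ :=
  G.eccOn p.1.1 p.1.2 p.2

/-- `f` is piecewise affine on `[0,1]` with at most `N` pieces. -/
def PWAffine (f : ℝ → ℝ) (N : ℕ) : Prop :=
  ∃ t : Fin (N + 1) → ℝ, Monotone t ∧ t 0 = 0 ∧ t (Fin.last N) = 1 ∧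
    ∀ i : Fin N, ∃ a b : ℝ, ∀ x ∈ Icc (t i.castSucc) (t i.succ), f x = a * x + b

/-! Take a path `0, 1, …, 3k-1` of unit edges, hang a spike of length `40k` at each middle
vertex `k + t`, and join vertices `a < k` to `2k + b` (`b < k`) by designated edges of length
`4k`, as many as wanted. Seen from a point of a designated edge, the farthest points are the
spike tips, and the distance to the `t`-th tip is a tent in the position along the edge; the `k`
tents have the same height and slopes and their peaks are evenly spaced. So the eccentricity along
the edge is a sawtooth with `k` peaks and `k - 1` valleys, and each of these `2k - 1` kinks forces
a breakpoint of its own, strictly inside `[0, 1]`, in any piecewise affine description. -/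

namespace WGraph

variable (G : WGraph n)

lemma walkWeight_cons {u v w : Fin n} (h : G.toSimple.Adj u v) (p : G.toSimple.Walk v w) :
    G.walkWeight (.cons h p) = G.w u v + G.walkWeight p := by
  simp [walkWeight]

lemma walkWeight_concat {u v w : Fin n} (p : G.toSimple.Walk u v) (h : G.toSimple.Adj v w) :
    G.walkWeight (p.concat h) = G.walkWeight p + G.w v w := by
  simp [walkWeight, SimpleGraph.Walk.darts_concat]

lemma walkWeight_reverse {u v : Fin n} (p : G.toSimple.Walk u v) :
    G.walkWeight p.reverse = G.walkWeight p := by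
  simp only [walkWeight, SimpleGraph.Walk.darts_reverse, List.map_reverse, List.sum_reverse,
    List.map_map]
  congr 2
  ext d
  exact G.wsymm _ _

lemma sub_le_walkWeight (φ : Fin n → ℝ) (hφ : ∀ a b, G.adj a b = true → φ b - φ a ≤ G.w a b)
    {u v : Fin n} (p : G.toSimple.Walk u v) : φ v - φ u ≤ G.walkWeight p := by
  induction p with
  | nil => simp [walkWeight]
  | @cons a b c h p ih =>
    rw [G.walkWeight_cons h p]
    linarith [hφ a b h]

lemma walkWeight_nonneg {u v : Fin n} (p : G.toSimple.Walk u v) : 0 ≤ G.walkWeight p := by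
  simpa using G.sub_le_walkWeight 0 (fun a b h => by simpa using (G.wpos a b h).le) p

lemma vdist_le_walkWeight {u v : Fin n} (p : G.toSimple.Walk u v) :
    G.vdist u v ≤ G.walkWeight p :=
  csInf_le ⟨0, by rintro x ⟨q, rfl⟩; exact G.walkWeight_nonneg q⟩ ⟨p, rfl⟩

lemma vdist_self (u : Fin n) : G.vdist u u = 0 :=
  le_antisymm (by simpa [walkWeight] using G.vdist_le_walkWeight .nil)
    (Real.sInf_nonneg (by rintro x ⟨p, rfl⟩; exact G.walkWeight_nonneg p))

lemma vdist_comm (u v : Fin n) : G.vdist u v = G.vdist v u := by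
  suffices h : ∀ u v, {x | ∃ p : G.toSimple.Walk u v, x = G.walkWeight p} ⊆
      {x | ∃ p : G.toSimple.Walk v u, x = G.walkWeight p} by
    exact congrArg sInf ((h u v).antisymm (h v u))
  rintro u v x ⟨p, rfl⟩
  exact ⟨p.reverse, (G.walkWeight_reverse p).symm⟩

lemma vdist_le_vdist_add_w {u s v : Fin n} (h : G.adj s v = true) :
    G.vdist u v ≤ G.vdist u s + G.w s v := by
  rcases isEmpty_or_nonempty (G.toSimple.Walk u s) with hus | ⟨⟨p⟩⟩
  · -- without walks to `s` there are none to its neighbour `v` either, and both `sInf ∅ = 0`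
    have huv : IsEmpty (G.toSimple.Walk u v) :=
      ⟨fun p => hus.false (p.concat ((G.toSimple.adj_comm s v).mp h))⟩
    simpa [vdist] using (G.wpos s v h).le
  · have hadj : G.toSimple.Adj s v := h
    suffices G.vdist u v - G.w s v ≤ G.vdist u s by linarith
    refine le_csInf ⟨_, p, rfl⟩ ?_
    rintro x ⟨q, rfl⟩
    linarith [G.vdist_le_walkWeight (q.concat hadj), G.walkWeight_concat q hadj]

lemma sub_le_vdist (φ : Fin n → ℝ) (hφ : ∀ a b, G.adj a b = true → φ b - φ a ≤ G.w a b)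
    {u v : Fin n} (huv : G.toSimple.Reachable u v) : φ v - φ u ≤ G.vdist u v :=
  le_csInf (huv.elim fun p => ⟨_, p, rfl⟩) (by rintro x ⟨p, rfl⟩; exact G.sub_le_walkWeight φ hφ p)

lemma pdist_le_add_w {u v s t p : Fin n} (hp : p = s ∨ p = t) (hst : G.adj s t = true)
    (a : ℝ) {b : ℝ} (hb : b ∈ Icc (0 : ℝ) 1) :
    G.pdist u v a s t b ≤
      min (a * G.w u v + G.vdist u p) ((1 - a) * G.w u v + G.vdist v p) + G.w s t := by
  have hbase : G.pdist u v a s t b ≤ min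
      (min (a * G.w u v + G.vdist u s + b * G.w s t)
           (a * G.w u v + G.vdist u t + (1 - b) * G.w s t))
      (min ((1 - a) * G.w u v + G.vdist v s + b * G.w s t)
           ((1 - a) * G.w u v + G.vdist v t + (1 - b) * G.w s t)) := by
    unfold pdist
    split_ifs <;> first | exact min_le_right _ _ | exact le_rfl
  have h1 := hbase.trans ((min_le_left _ _).trans (min_le_left _ _))
  have h2 := hbase.trans ((min_le_left _ _).trans (min_le_right _ _))
  have h3 := hbase.trans ((min_le_right _ _).trans (min_le_left _ _))
  have h4 := hbase.trans ((min_le_right _ _).trans (min_le_right _ _))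
  have hw := (G.wpos s t hst).le
  have hbw : b * G.w s t ≤ G.w s t := mul_le_of_le_one_left hw hb.2
  have hbw' : (1 - b) * G.w s t ≤ G.w s t := mul_le_of_le_one_left hw (by linarith [hb.1])
  rw [← min_add_add_right]
  rcases hp with rfl | rfl
  · exact le_min (by linarith) (by linarith)
  · exact le_min (by linarith) (by linarith)

lemma pdist_zero_eq {u v s t : Fin n} (hs : u ≠ s) (ht : u ≠ t) (hts : G.adj t s = true)
    (a : ℝ) :
    G.pdist u v a s t 0 = min (a * G.w u v + G.vdist u s) ((1 - a) * G.w u v + G.vdist v s) := by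
  have hu := G.vdist_le_vdist_add_w (u := u) hts
  have hv := G.vdist_le_vdist_add_w (u := v) hts
  rw [G.wsymm] at hu hv
  simp only [pdist, hs, ht, false_and, if_false, zero_mul, add_zero, sub_zero, one_mul]
  rw [min_eq_left (a := a * G.w u v + G.vdist u s) (by linarith),
    min_eq_left (a := (1 - a) * G.w u v + G.vdist v s) (by linarith)]

lemma eccOn_eq_pdist {u v s₀ t₀ : Fin n} {a b₀ : ℝ} (h₀ : G.adj s₀ t₀ = true)
    (hb₀ : b₀ ∈ Icc (0 : ℝ) 1)
    (hmax : ∀ s t, G.adj s t = true → ∀ b ∈ Icc (0 : ℝ) 1,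
      G.pdist u v a s t b ≤ G.pdist u v a s₀ t₀ b₀) :
    G.eccOn u v a = G.pdist u v a s₀ t₀ b₀ :=
  IsGreatest.csSup_eq ⟨⟨s₀, t₀, h₀, b₀, hb₀, rfl⟩,
    by rintro x ⟨s, t, h, b, hb, rfl⟩; exact hmax s t h b hb⟩

end WGraph

lemma exists_breakpoint_mem_Ioo {f : ℝ → ℝ} {N : ℕ} {t : Fin (N + 1) → ℝ} (ht0 : t 0 = 0)
    (ht1 : t (Fin.last N) = 1)
    (haff : ∀ i : Fin N, ∃ a b : ℝ, ∀ x ∈ Icc (t i.castSucc) (t i.succ), f x = a * x + b)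
    {y δ : ℝ} (hδ : 0 < δ) (h0 : 0 ≤ y - δ) (h1 : y + δ ≤ 1)
    (hkink : f (y - δ) + f (y + δ) ≠ 2 * f y) :
    ∃ i, t i ∈ Ioo (y - δ) (y + δ) := by
  classical
  by_contra! hnone
  -- the first partition point to the right of the window closes the piece containing it
  set S := Finset.univ.filter fun i => y + δ ≤ t i
  have hS : S.Nonempty := ⟨Fin.last N, by simp [S, ht1, h1]⟩
  have hmin : y + δ ≤ t (S.min' hS) := (Finset.mem_filter.mp (S.min'_mem hS)).2
  obtain h | ⟨j, hj⟩ := Fin.eq_zero_or_eq_succ (S.min' hS)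
  · rw [h, ht0] at hmin
    linarith
  have hleft : t j.castSucc ≤ y - δ := by
    by_contra! hlt
    have hnot : j.castSucc ∉ S := fun hmem =>
      Fin.castSucc_lt_succ.not_ge (hj ▸ S.min'_le _ hmem)
    exact hnot (Finset.mem_filter.mpr ⟨Finset.mem_univ _, not_lt.mp fun h => hnone _ ⟨hlt, h⟩⟩)
  obtain ⟨a, b, hab⟩ := haff j
  rw [← hj] at hab
  rw [hab (y - δ) ⟨hleft, by linarith⟩, hab y ⟨by linarith, by linarith⟩,
    hab (y + δ) ⟨by linarith, hmin⟩] at hkink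
  exact hkink (by ring)

/-- Disjoint windows `[y j - δ, y j + δ] ⊆ [0, 1]` on which `f` fails the midpoint test each
contain a breakpoint other than `0` and `1`. -/
lemma PWAffine.lt_of_kinks {f : ℝ → ℝ} {N m : ℕ} (hf : PWAffine f N) {y : ℕ → ℝ} {δ : ℝ}
    (hδ : 0 < δ) (h0 : ∀ j < m, 0 ≤ y j - δ) (h1 : ∀ j < m, y j + δ ≤ 1)
    (hsep : ∀ j j', j < j' → y j + 2 * δ ≤ y j')
    (hkink : ∀ j < m, f (y j - δ) + f (y j + δ) ≠ 2 * f (y j)) :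
    m < N := by
  obtain ⟨t, -, ht0, ht1, haff⟩ := hf
  have hN : N ≠ 0 := by
    rintro rfl
    exact zero_ne_one (ht0.symm.trans ht1)
  have hbp : ∀ j, ∃ i : Fin (N + 1), j < m → t i ∈ Ioo (y j - δ) (y j + δ) := by
    intro j
    by_cases hj : j < m
    · obtain ⟨i, hi⟩ := exists_breakpoint_mem_Ioo ht0 ht1 haff hδ (h0 j hj) (h1 j hj) (hkink j hj)
      exact ⟨i, fun _ => hi⟩
    · exact ⟨0, fun h => absurd h hj⟩
  choose g hg using hbp
  have hcard := Finset.card_le_card_of_injOn (s := Finset.range m) (t := Finset.Ioo 0 N)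
    (fun j => (g j : ℕ)) ?_ ?_
  · simp only [Finset.card_range, Nat.card_Ioo] at hcard
    omega
  · intro j hj
    have hj : j < m := Finset.mem_range.mp hj
    obtain ⟨hlo, hhi⟩ := hg j hj
    refine Finset.mem_Ioo.mpr ⟨Nat.pos_of_ne_zero fun h => ?_,
      lt_of_le_of_ne (Nat.lt_succ_iff.mp (g j).isLt) fun h => ?_⟩
    · rw [show g j = 0 from Fin.ext h, ht0] at hlo
      linarith [h0 j hj]
    · rw [show g j = Fin.last N from Fin.ext h, ht1] at hhi
      linarith [h1 j hj]
  · intro j hj j' hj' hjj'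
    have hj : j < m := Finset.mem_range.mp hj
    have hj' : j' < m := Finset.mem_range.mp hj'
    have ht : t (g j) = t (g j') := congrArg t (Fin.ext hjj')
    obtain ⟨hlo, hhi⟩ := hg j hj
    obtain ⟨hlo', hhi'⟩ := hg j' hj'
    rcases lt_trichotomy j j' with h | h | h
    · linarith [hsep j j' h]
    · exact h
    · linarith [hsep j' j h]

lemma min_add_sub_eq_sub_abs (x y : ℝ) : min (x + y) (x - y) = x - |y| := by
  rcases abs_cases y with ⟨h, hy⟩ | ⟨h, hy⟩
  · rw [h, min_eq_right (by linarith)]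
  · rw [h, min_eq_left (by linarith)]; ring

lemma abs_le_abs_add_intCast {c : ℝ} (hc : |c| ≤ 1 / 2) (z : ℤ) : |c| ≤ |c + z| := by
  rcases eq_or_ne z 0 with rfl | hz
  · simp
  · have hz1 : (1 : ℝ) ≤ |(z : ℝ)| := by exact_mod_cast Int.one_le_abs hz
    have := abs_sub_abs_le_abs_sub (z : ℝ) (-c)
    rw [abs_neg, sub_neg_eq_add, add_comm] at this
    linarith

namespace SpikeNet

/- The oriented edges `a → b` (always `a < b`) of the network on the vertices `0, …, 4k-1`:
the path `0, 1, …, 3k-1`, a spike `k + t → 3k + t` for every `t < k`, and the designated edges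
`a → 2k + b` for `a, b < k`, the first `l` of them in the order of `a + k b`. -/
def IsPathEdge (k a b : ℕ) : Prop := b = a + 1 ∧ b < 3 * k

def IsSpike (k a b : ℕ) : Prop := k ≤ a ∧ a < 2 * k ∧ b = a + 2 * k

def IsDesignated (k l a b : ℕ) : Prop := a < k ∧ 2 * k ≤ b ∧ b < 3 * k ∧ a + k * (b - 2 * k) < l

def IsEdge (k l a b : ℕ) : Prop := IsPathEdge k a b ∨ IsSpike k a b ∨ IsDesignated k l a b

instance (k a b : ℕ) : Decidable (IsPathEdge k a b) := by unfold IsPathEdge; infer_instance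

instance (k a b : ℕ) : Decidable (IsSpike k a b) := by unfold IsSpike; infer_instance

instance (k l a b : ℕ) : Decidable (IsDesignated k l a b) := by
  unfold IsDesignated; infer_instance

instance (k l a b : ℕ) : Decidable (IsEdge k l a b) := by unfold IsEdge; infer_instance

variable {k l : ℕ}

lemma IsEdge.lt {a b : ℕ} (h : IsEdge k l a b) : a < b := by
  unfold IsEdge IsPathEdge IsSpike IsDesignated at h; omega

/- A designated edge (weight `4k`) is longer than any path between its ends, so it is never a
shortcut; a spike (weight `40k`) is so long that the points farthest from a designated edge are
spike tips. -/
noncomputable def weight (k l a b : ℕ) : ℝ :=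
  if IsSpike k a b ∨ IsSpike k b a then 40 * k
  else if IsDesignated k l a b ∨ IsDesignated k l b a then 4 * k else 1

noncomputable def net (k l : ℕ) : WGraph (4 * k) where
  adj u v := decide (IsEdge k l u v ∨ IsEdge k l v u)
  symm u v := decide_eq_decide.mpr or_comm
  loopless u := by simp only [or_self, decide_eq_false_iff_not]; exact fun h => h.lt.false
  w u v := weight k l u v
  wsymm u v := by unfold weight; split_ifs <;> first | rfl | tauto
  wpos u v h := by
    have hk : 0 < k := by
      have h' : IsEdge k l u v ∨ IsEdge k l v u := of_decide_eq_true h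
      unfold IsEdge IsPathEdge IsSpike IsDesignated at h'; omega
    unfold weight
    split_ifs <;> positivity

lemma adj_iff {u v : Fin (4 * k)} :
    (net k l).adj u v = true ↔ IsEdge k l u v ∨ IsEdge k l v u := by
  simp [net]

lemma adj_of_isEdge {u v : Fin (4 * k)} (h : IsEdge k l u v) : (net k l).adj u v = true :=
  adj_iff.mpr (Or.inl h)

lemma w_of_isPathEdge {u v : Fin (4 * k)} (h : IsPathEdge k u v) : (net k l).w u v = 1 := by
  unfold IsPathEdge at h
  simp only [net, weight]
  rw [if_neg (by unfold IsSpike; omega), if_neg (by unfold IsDesignated; omega)]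

lemma w_of_isSpike {u v : Fin (4 * k)} (h : IsSpike k u v) : (net k l).w u v = 40 * k := by
  simp only [net, weight]
  rw [if_pos (Or.inl h)]

lemma w_of_isDesignated {u v : Fin (4 * k)} (h : IsDesignated k l u v) :
    (net k l).w u v = 4 * k := by
  simp only [net, weight]
  rw [if_neg (by unfold IsSpike; unfold IsDesignated at h; omega), if_pos (Or.inl h)]

lemma reachable_zero (hk : 0 < k) (v : Fin (4 * k)) :
    (net k l).toSimple.Reachable ⟨0, by omega⟩ v := by
  have hpath : ∀ m (hm : m < 3 * k), (net k l).toSimple.Reachable ⟨0, by omega⟩ ⟨m, by omega⟩ := by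
    intro m
    induction m with
    | zero => exact fun _ => .refl _
    | succ m ih =>
      intro hm
      have hadj : (net k l).toSimple.Adj ⟨m, by omega⟩ ⟨m + 1, by omega⟩ :=
        adj_of_isEdge (Or.inl ⟨rfl, hm⟩)
      exact (ih (by omega)).trans hadj.reachable
  by_cases hv : v.val < 3 * k
  · exact hpath v hv
  · have hadj : (net k l).toSimple.Adj ⟨v - 2 * k, by omega⟩ v :=
      adj_of_isEdge (Or.inr (Or.inl ⟨by dsimp only; omega, by dsimp only; omega,
        by dsimp only; omega⟩))
    exact (hpath _ (by omega)).trans hadj.reachable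

lemma connected (hk : 0 < k) : (net k l).toSimple.Connected :=
  (SimpleGraph.connected_iff _).mpr
    ⟨fun u v => (reachable_zero hk u).symm.trans (reachable_zero hk v), ⟨⟨0, by omega⟩⟩⟩

lemma vdist_le_sub {i j : Fin (4 * k)} (hij : i.val ≤ j.val) (hj : j.val < 3 * k) :
    (net k l).vdist i j ≤ (j : ℝ) - i := by
  obtain ⟨d, hd⟩ := Nat.exists_eq_add_of_le hij
  induction d generalizing j with
  | zero =>
    rw [show j = i from Fin.ext (by omega), WGraph.vdist_self, sub_self]
  | succ d ih =>
    set j' : Fin (4 * k) := ⟨i + d, by omega⟩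
    have hstep := (net k l).vdist_le_vdist_add_w (u := i)
      (adj_of_isEdge (u := j') (v := j) (Or.inl ⟨by simp [j']; omega, hj⟩))
    rw [w_of_isPathEdge (⟨by simp [j']; omega, hj⟩ : IsPathEdge k j' j)] at hstep
    have hj' := ih (j := j') (by simp [j']) (by simp [j']; omega) rfl
    have hcast : (j : ℝ) = i + d + 1 := by rw [hd]; push_cast; ring
    simp only [j'] at hj'
    push_cast at hj'
    linarith

lemma vdist_le_abs {i j : Fin (4 * k)} (hi : i.val < 3 * k) (hj : j.val < 3 * k) :
    (net k l).vdist i j ≤ |(j : ℝ) - i| := by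
  rcases le_total i.val j.val with h | h
  · exact (vdist_le_sub h hj).trans (le_abs_self _)
  · rw [WGraph.vdist_comm, abs_sub_comm]
    exact (vdist_le_sub h hi).trans (le_abs_self _)

/-- The distance from `c`, when `c` lies on the path. -/
noncomputable def potential (c v : Fin (4 * k)) : ℝ :=
  if v.val < 3 * k then |(v : ℝ) - c| else |(v : ℝ) - 2 * k - c| + 40 * k

lemma abs_potential_sub_le {c a b : Fin (4 * k)} (h : IsEdge k l a b) :
    |potential c b - potential c a| ≤ (net k l).w a b := by
  rcases h with h | h | h
  · rw [w_of_isPathEdge h]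
    obtain ⟨hb, hb3⟩ := h
    have hab : (b : ℝ) = a + 1 := by rw [hb]; push_cast; ring
    simp only [potential, if_pos hb3, if_pos (show a.val < 3 * k by omega)]
    refine (abs_abs_sub_abs_le_abs_sub _ _).trans ?_
    rw [hab]; norm_num
  · rw [w_of_isSpike h]
    obtain ⟨ha, ha2, hb⟩ := h
    have hab : (b : ℝ) = a + 2 * k := by rw [hb]; push_cast; ring
    simp only [potential, if_neg (show ¬ b.val < 3 * k by omega),
      if_pos (show a.val < 3 * k by omega)]
    rw [hab, show (a : ℝ) + 2 * k - 2 * k - c = a - c by ring, add_sub_cancel_left,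
      abs_of_nonneg (by positivity)]
  · rw [w_of_isDesignated h]
    obtain ⟨ha, hb, hb3, -⟩ := h
    have hba : (b : ℝ) - a ≤ 4 * k := by
      have : (b : ℝ) < 3 * k := by exact_mod_cast hb3
      linarith [(a.val.cast_nonneg : (0 : ℝ) ≤ a), (k.cast_nonneg : (0 : ℝ) ≤ k)]
    have hab : (a : ℝ) ≤ b := by exact_mod_cast (show a.val ≤ b.val by omega)
    simp only [potential, if_pos hb3, if_pos (show a.val < 3 * k by omega)]
    refine (abs_abs_sub_abs_le_abs_sub _ _).trans ?_
    rw [sub_sub_sub_cancel_right, abs_of_nonneg (by linarith)]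
    exact hba

lemma potential_sub_le (c a b : Fin (4 * k)) (h : (net k l).adj a b = true) :
    potential c b - potential c a ≤ (net k l).w a b := by
  rcases adj_iff.mp h with h | h
  · exact (abs_le.mp (abs_potential_sub_le h)).2
  · have h' := abs_potential_sub_le (c := c) h
    rw [abs_sub_comm, WGraph.wsymm] at h'
    exact (abs_le.mp h').2

lemma vdist_tip {c v : Fin (4 * k)} (hc : c.val < 3 * k) (hv : 3 * k ≤ v.val) :
    (net k l).vdist c v = |(v : ℝ) - 2 * k - c| + 40 * k := by
  set base : Fin (4 * k) := ⟨v - 2 * k, by omega⟩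
  have hspike : IsSpike k base v :=
    ⟨by simp [base]; omega, by simp [base]; omega, by simp [base]; omega⟩
  have hbase : ((base : ℕ) : ℝ) = v - 2 * k := by
    simp only [base]; rw [Nat.cast_sub (by omega)]; push_cast; ring
  refine le_antisymm ?_ ?_
  · have h := (net k l).vdist_le_vdist_add_w (u := c) (adj_of_isEdge (Or.inr (Or.inl hspike)))
    rw [w_of_isSpike hspike] at h
    have h' := vdist_le_abs (l := l) hc (show base.val < 3 * k by simp [base]; omega)
    rw [hbase] at h'
    linarith
  · have h := (net k l).sub_le_vdist (potential c) (potential_sub_le c)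
      ((connected (l := l) (by omega)).preconnected c v)
    simpa [potential, hc, show ¬ v.val < 3 * k by omega] using h

/-- The distance from the point at parameter `a` of an edge `uv` of weight `4k` to the tip of
the `t`-th spike, when `U` and `V` are the path positions of `u` and `v`. -/
noncomputable def tipDist (k : ℕ) (U V a : ℝ) (t : ℕ) : ℝ :=
  40 * k + min (a * (4 * k) + (k + t - U)) ((1 - a) * (4 * k) + (V - (k + t)))

lemma tipDist_eq_sub_abs (k : ℕ) (U V a : ℝ) (t : ℕ) :
    tipDist k U V a t = 40 * k + (4 * k + V - U) / 2 - |a * (4 * k) - (k + (U + V) / 2 - t)| := by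
  rw [tipDist, add_sub_assoc (40 * (k : ℝ)), ← min_add_sub_eq_sub_abs]
  congr 2 <;> ring

lemma exists_endpoint {s t : Fin (4 * k)} (hst : (net k l).adj s t = true) :
    ∃ p, (p = s ∨ p = t) ∧ p.val < 3 * k ∧
      ((net k l).w s t ≤ 4 * k ∨ k ≤ p.val ∧ p.val < 2 * k ∧ (net k l).w s t = 40 * k) := by
  have key : ∀ a b : Fin (4 * k), IsEdge k l a b → ∃ p, (p = a ∨ p = b) ∧ p.val < 3 * k ∧
      ((net k l).w a b ≤ 4 * k ∨ k ≤ p.val ∧ p.val < 2 * k ∧ (net k l).w a b = 40 * k) := by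
    intro a b h
    rcases h with h | h | h
    · refine ⟨a, .inl rfl, by unfold IsPathEdge at h; omega, .inl ?_⟩
      rw [w_of_isPathEdge h]
      have : (1 : ℝ) ≤ k := by exact_mod_cast (show 1 ≤ k by unfold IsPathEdge at h; omega)
      linarith
    · exact ⟨a, .inl rfl, by unfold IsSpike at h; omega, .inr ⟨h.1, h.2.1, w_of_isSpike h⟩⟩
    · exact ⟨a, .inl rfl, by unfold IsDesignated at h; omega, .inl (w_of_isDesignated h).le⟩
  rcases adj_iff.mp hst with h | h
  · exact key s t h
  · obtain ⟨p, hp, hp3, hw⟩ := key t s h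
    rw [WGraph.wsymm] at hw
    exact ⟨p, hp.symm, hp3, hw⟩

section DesignatedEdge

variable {u v : Fin (4 * k)}

lemma exists_pdist_le_tipDist (hd : IsDesignated k l u v) {a : ℝ} (ha : a ∈ Icc (0 : ℝ) 1)
    {s t : Fin (4 * k)} (hst : (net k l).adj s t = true) {b : ℝ} (hb : b ∈ Icc (0 : ℝ) 1) :
    ∃ t' < k, (net k l).pdist u v a s t b ≤ tipDist k u v a t' := by
  obtain ⟨hu, hv, hv3, -⟩ := id hd
  have hU : (u : ℝ) + 1 ≤ k := by exact_mod_cast hu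
  have hV : 2 * (k : ℝ) ≤ v := by exact_mod_cast hv
  obtain ⟨p, hp, hp3, hw⟩ := exists_endpoint hst
  have h := (net k l).pdist_le_add_w (u := u) (v := v) hp hst a hb
  rw [w_of_isDesignated hd] at h
  have hup := vdist_le_abs (l := l) (show u.val < 3 * k by omega) hp3
  have hvp := vdist_le_abs (l := l) hv3 hp3
  have hP : (p : ℝ) + 1 ≤ 3 * k := by exact_mod_cast hp3
  rcases hw with hw | ⟨hpk, hp2, hw⟩
  · refine ⟨0, by omega, ?_⟩
    have hfar : 40 * (k : ℝ) ≤ tipDist k u v a 0 := by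
      rw [tipDist, le_add_iff_nonneg_right]
      have h4k : (0 : ℝ) ≤ 4 * k := by positivity
      have := mul_nonneg ha.1 h4k
      have := mul_nonneg (sub_nonneg.mpr ha.2) h4k
      exact le_min (by push_cast; linarith) (by push_cast; linarith)
    have habs : |(p : ℝ) - u| ≤ 3 * k := abs_le.mpr ⟨by linarith [p.val.cast_nonneg (α := ℝ)],
      by linarith [u.val.cast_nonneg (α := ℝ)]⟩
    have := min_le_left (a * (4 * k) + (net k l).vdist u p)
      ((1 - a) * (4 * k) + (net k l).vdist v p)
    nlinarith [ha.2]
  · refine ⟨p - k, by omega, ?_⟩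
    have hpk' : ((p - k : ℕ) : ℝ) = p - k := by rw [Nat.cast_sub hpk]
    have hPk : (k : ℝ) ≤ p := by exact_mod_cast hpk
    have hP2 : (p : ℝ) + 1 ≤ 2 * k := by exact_mod_cast hp2
    rw [abs_of_nonneg (by linarith)] at hup
    rw [abs_of_nonpos (by linarith)] at hvp
    rw [hw] at h
    rw [tipDist, hpk', add_comm (40 * (k : ℝ))]
    refine h.trans (add_le_add_left (min_le_min ?_ ?_) _) <;> linarith

lemma pdist_tip (hd : IsDesignated k l u v) {t : ℕ} (ht : t < k) (a : ℝ) :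
    (net k l).pdist u v a ⟨3 * k + t, by omega⟩ ⟨k + t, by omega⟩ 0 = tipDist k u v a t := by
  obtain ⟨hu, hv, hv3, -⟩ := id hd
  have hspike : IsSpike k (k + t) (3 * k + t) := ⟨by omega, by omega, by omega⟩
  rw [WGraph.pdist_zero_eq _ (Fin.ne_of_val_ne (by dsimp only; omega))
      (Fin.ne_of_val_ne (by dsimp only; omega)) (adj_of_isEdge (Or.inr (Or.inl hspike))),
    w_of_isDesignated hd, vdist_tip (by omega) (by dsimp only; omega),
    vdist_tip hv3 (by dsimp only; omega)]
  have hU : (u : ℝ) < k := by exact_mod_cast hu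
  have hV : 2 * (k : ℝ) ≤ v := by exact_mod_cast hv
  have ht' : (t : ℝ) < k := by exact_mod_cast ht
  push_cast
  rw [abs_of_nonneg (by linarith [t.cast_nonneg (α := ℝ)]), abs_of_nonpos (by linarith),
    tipDist, ← min_add_add_left]
  congr 1 <;> ring

lemma eccOn_eq_tipDist (hd : IsDesignated k l u v) {a : ℝ} (ha : a ∈ Icc (0 : ℝ) 1) {t₀ : ℕ}
    (ht₀ : t₀ < k) (hmax : ∀ t < k, tipDist k u v a t ≤ tipDist k u v a t₀) :
    (net k l).eccOn u v a = tipDist k u v a t₀ := by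
  have hspike : IsSpike k (k + t₀) (3 * k + t₀) := ⟨by omega, by omega, by omega⟩
  rw [← pdist_tip hd ht₀]
  refine (net k l).eccOn_eq_pdist (adj_iff.mpr (.inr (.inr (.inl hspike)))) ⟨le_rfl, zero_le_one⟩
    fun s t hst b hb => ?_
  obtain ⟨t', ht', h⟩ := exists_pdist_le_tipDist hd ha hst hb
  rw [pdist_tip hd ht₀]
  exact h.trans (hmax t' ht')

lemma eccOn_eq_sub_abs (hd : IsDesignated k l u v) {t₀ : ℕ} (ht₀ : t₀ < k) {c : ℝ}
    (hc : |c| ≤ 1 / 2) :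
    (net k l).eccOn u v ((k + (u + v) / 2 - t₀ + c) / (4 * k)) =
      40 * k + (4 * k + v - u) / 2 - |c| := by
  obtain ⟨hu, hv, hv3, -⟩ := id hd
  have hk : (0 : ℝ) < k := by exact_mod_cast (show 0 < k by omega)
  have hU : (0 : ℝ) ≤ u := u.val.cast_nonneg
  have hU' : (u : ℝ) + 1 ≤ k := by exact_mod_cast hu
  have hV : 2 * (k : ℝ) ≤ v := by exact_mod_cast hv
  have hV3 : (v : ℝ) + 1 ≤ 3 * k := by exact_mod_cast hv3
  have ht₀' : (t₀ : ℝ) + 1 ≤ k := by exact_mod_cast ht₀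
  have hc' := abs_le.mp hc
  set a := (k + (u + v) / 2 - t₀ + c) / (4 * k)
  have ha : a * (4 * k) = k + (u + v) / 2 - t₀ + c := div_mul_cancel₀ _ (by positivity)
  have hpos : ∀ t : ℕ, a * (4 * k) - (k + (u + v) / 2 - t) = c + ((t - t₀ : ℤ) : ℝ) := by
    intro t; rw [ha]; push_cast; ring
  have ha01 : a ∈ Icc (0 : ℝ) 1 := by
    constructor
    · exact div_nonneg (by linarith [t₀.cast_nonneg (α := ℝ)]) (by positivity)
    · rw [div_le_one (by positivity)]; linarith [t₀.cast_nonneg (α := ℝ)]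
  rw [eccOn_eq_tipDist hd ha01 ht₀, tipDist_eq_sub_abs, hpos]
  · simp
  · intro t _
    rw [tipDist_eq_sub_abs, tipDist_eq_sub_abs, hpos, hpos, sub_self, Int.cast_zero, add_zero]
    linarith [abs_le_abs_add_intCast hc (t - t₀)]

/-- At arc length `1 + (u + v) / 2 + j / 2` along the edge, even `j` give the `k` peaks of the
eccentricity and odd `j` the valleys between them. -/
lemma eccOn_midpoint_ne (hd : IsDesignated k l u v) {j : ℕ} (hj : j < 2 * k - 1) :
    (net k l).eccOn u v ((1 + (u + v) / 2 + j / 2 - 1 / 8) / (4 * k)) +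
      (net k l).eccOn u v ((1 + (u + v) / 2 + j / 2 + 1 / 8) / (4 * k)) ≠
      2 * (net k l).eccOn u v ((1 + (u + v) / 2 + j / 2) / (4 * k)) := by
  have hecc := fun {t₀ : ℕ} (ht₀ : t₀ < k) {c : ℝ} (hc : |c| ≤ 1 / 2) =>
    eccOn_eq_sub_abs hd ht₀ hc
  obtain ⟨i, rfl | rfl⟩ := Nat.even_or_odd' j
  · obtain ⟨t₀, ht₀⟩ : ∃ t₀, t₀ + i + 1 = k := ⟨k - 1 - i, by omega⟩
    have ht : (t₀ : ℝ) + i + 1 = k := by exact_mod_cast ht₀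
    rw [show 1 + (u + v) / 2 + ((2 * i : ℕ) : ℝ) / 2 - 1 / 8 = k + (u + v) / 2 - t₀ + -(1 / 8) by
        push_cast; linarith,
      show 1 + (u + v) / 2 + ((2 * i : ℕ) : ℝ) / 2 + 1 / 8 = k + (u + v) / 2 - t₀ + 1 / 8 by
        push_cast; linarith,
      show 1 + (u + v) / 2 + ((2 * i : ℕ) : ℝ) / 2 = k + (u + v) / 2 - t₀ + 0 by
        push_cast; linarith,
      hecc (by omega) (by norm_num), hecc (by omega) (by norm_num), hecc (by omega) (by norm_num)]
    norm_num
    intro h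
    linarith
  · obtain ⟨t₀, ht₀⟩ : ∃ t₀, t₀ + i + 2 = k := ⟨k - 2 - i, by omega⟩
    have ht : (t₀ : ℝ) + i + 2 = k := by exact_mod_cast ht₀
    rw [show 1 + (u + v) / 2 + ((2 * i + 1 : ℕ) : ℝ) / 2 - 1 / 8
          = k + (u + v) / 2 - (t₀ + 1 : ℕ) + 3 / 8 by push_cast; linarith,
      show 1 + (u + v) / 2 + ((2 * i + 1 : ℕ) : ℝ) / 2 + 1 / 8
          = k + (u + v) / 2 - t₀ + -(3 / 8) by push_cast; linarith,
      show 1 + (u + v) / 2 + ((2 * i + 1 : ℕ) : ℝ) / 2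
          = k + (u + v) / 2 - (t₀ + 1 : ℕ) + 1 / 2 by push_cast; linarith,
      hecc (by omega) (by norm_num), hecc (by omega) (by norm_num), hecc (by omega) (by norm_num)]
    norm_num
    intro h
    linarith

lemma lt_of_pwAffine_eccOn (hd : IsDesignated k l u v) {N : ℕ}
    (hN : PWAffine (fun a => (net k l).eccOn u v a) N) : 2 * k - 1 < N := by
  obtain ⟨hu, hv, hv3, -⟩ := id hd
  have hk : (0 : ℝ) < 4 * k := by exact_mod_cast (show 0 < 4 * k by omega)
  have hU : (0 : ℝ) ≤ u := u.val.cast_nonneg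
  have hU' : (u : ℝ) + 1 ≤ k := by exact_mod_cast hu
  have hV : (0 : ℝ) ≤ v := v.val.cast_nonneg
  have hV3 : (v : ℝ) + 1 ≤ 3 * k := by exact_mod_cast hv3
  refine hN.lt_of_kinks (y := fun j => (1 + (u + v) / 2 + j / 2) / (4 * k)) (δ := 1 / 8 / (4 * k))
    (by positivity) (fun j _ => ?_) (fun j hj => ?_) (fun j j' hjj' => ?_)
    (fun j hj => by simpa only [← sub_div, ← add_div] using eccOn_midpoint_ne hd hj)
  · rw [← sub_div]
    exact div_nonneg (by linarith [j.cast_nonneg (α := ℝ)]) hk.le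
  · rw [← add_div, div_le_one hk]
    have : (j : ℝ) + 2 ≤ 2 * k := by exact_mod_cast (show j + 2 ≤ 2 * k by omega)
    linarith
  · rw [mul_div_assoc', ← add_div]
    have : (j : ℝ) + 1 ≤ j' := by exact_mod_cast hjj'
    exact div_le_div_of_nonneg_right (by linarith) hk.le

end DesignatedEdge

def orientedEdges (k l : ℕ) : Finset (Fin (4 * k) × Fin (4 * k)) :=
  Finset.univ.filter fun e => IsEdge k l e.1 e.2

def designatedEdges (k l : ℕ) : Finset (Fin (4 * k) × Fin (4 * k)) :=
  Finset.univ.filter fun e => IsDesignated k l e.1 e.2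

lemma designatedEdges_subset : designatedEdges k l ⊆ orientedEdges k l := fun _ he =>
  Finset.mem_filter.mpr ⟨Finset.mem_univ _, .inr (.inr (Finset.mem_filter.mp he).2)⟩

lemma injOn_orientedEdges :
    Set.InjOn (fun e : Fin (4 * k) × Fin (4 * k) => s(e.1, e.2)) (orientedEdges k l) := by
  intro e he e' he' h
  have hlt := (Finset.mem_filter.mp he).2.lt
  have hlt' := (Finset.mem_filter.mp he').2.lt
  rcases Sym2.eq_iff.mp h with ⟨h1, h2⟩ | ⟨h1, h2⟩
  · exact Prod.ext h1 h2
  · rw [h1, h2] at hlt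
    exact absurd hlt' (lt_asymm hlt)

lemma edgeFinset_net :
    (net k l).toSimple.edgeFinset = (orientedEdges k l).image fun e => s(e.1, e.2) := by
  ext ⟨u, v⟩
  simp only [SimpleGraph.mem_edgeFinset, SimpleGraph.mem_edgeSet, Finset.mem_image,
    orientedEdges, Finset.mem_filter, Finset.mem_univ, true_and, Prod.exists, Sym2.eq_iff]
  refine ⟨fun h => ?_, ?_⟩
  · rcases adj_iff.mp h with h | h
    · exact ⟨u, v, h, .inl ⟨rfl, rfl⟩⟩
    · exact ⟨v, u, h, .inr ⟨rfl, rfl⟩⟩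
  · rintro ⟨a, b, h, ⟨rfl, rfl⟩ | ⟨rfl, rfl⟩⟩
    · exact adj_of_isEdge h
    · exact adj_iff.mpr (.inr h)

lemma card_filter_isPathEdge :
    (Finset.univ.filter fun e : Fin (4 * k) × Fin (4 * k) => IsPathEdge k e.1 e.2).card =
      3 * k - 1 := by
  refine (Finset.card_nbij (t := Finset.range (3 * k - 1)) (fun e => e.1.val) (fun e he => ?_)
    (fun e he e' he' h => ?_) (fun m hm => ?_)).trans (Finset.card_range _)
  · have := (Finset.mem_filter.mp he).2
    unfold IsPathEdge at this
    simp only [Finset.coe_range, Set.mem_Iio]; omega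
  · have h1 := (Finset.mem_filter.mp he).2
    have h2 := (Finset.mem_filter.mp he').2
    unfold IsPathEdge at h1 h2
    exact Prod.ext (Fin.ext h) (Fin.ext (by simp only at h; omega))
  · simp only [Finset.coe_range, Set.mem_Iio] at hm
    exact ⟨(⟨m, by omega⟩, ⟨m + 1, by omega⟩),
      Finset.mem_filter.mpr ⟨Finset.mem_univ _, (⟨rfl, by omega⟩ : IsPathEdge k m (m + 1))⟩, rfl⟩

lemma card_filter_isSpike :
    (Finset.univ.filter fun e : Fin (4 * k) × Fin (4 * k) => IsSpike k e.1 e.2).card = k := by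
  refine (Finset.card_nbij (t := Finset.range k) (fun e => e.1.val - k) (fun e he => ?_)
    (fun e he e' he' h => ?_) (fun m hm => ?_)).trans (Finset.card_range _)
  · have := (Finset.mem_filter.mp he).2
    unfold IsSpike at this
    simp only [Finset.coe_range, Set.mem_Iio]; omega
  · have h1 := (Finset.mem_filter.mp he).2
    have h2 := (Finset.mem_filter.mp he').2
    unfold IsSpike at h1 h2
    simp only at h
    exact Prod.ext (Fin.ext (by omega)) (Fin.ext (by omega))
  · simp only [Finset.coe_range, Set.mem_Iio] at hm
    exact ⟨(⟨k + m, by omega⟩, ⟨3 * k + m, by omega⟩), Finset.mem_filter.mpr ⟨Finset.mem_univ _,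
      (⟨by omega, by omega, by omega⟩ : IsSpike k (k + m) (3 * k + m))⟩,
      Nat.add_sub_cancel_left _ _⟩

lemma card_designatedEdges (hl : l ≤ k ^ 2) : (designatedEdges k l).card = l := by
  refine (Finset.card_nbij (t := Finset.range l) (fun e => e.1.val + k * (e.2.val - 2 * k))
    (fun e he => ?_) (fun e he e' he' h => ?_) (fun r hr => ?_)).trans (Finset.card_range _)
  · simpa using (Finset.mem_filter.mp he).2.2.2.2
  · obtain ⟨ha, hb, -⟩ := (Finset.mem_filter.mp he).2
    obtain ⟨ha', hb', -⟩ := (Finset.mem_filter.mp he').2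
    have hmod := congrArg (· % k) h
    have hdiv := congrArg (· / k) h
    simp only [Nat.add_mul_mod_self_left, Nat.mod_eq_of_lt ha, Nat.mod_eq_of_lt ha'] at hmod
    simp only [Nat.add_mul_div_left _ _ (show 0 < k by omega), Nat.div_eq_of_lt ha,
      Nat.div_eq_of_lt ha', zero_add] at hdiv
    exact Prod.ext (Fin.ext hmod) (Fin.ext (by omega))
  · simp only [Finset.coe_range, Set.mem_Iio] at hr
    have hk : 0 < k := Nat.pos_of_ne_zero (by rintro rfl; simp at hl; omega)
    have hdiv : r / k < k := Nat.div_lt_of_lt_mul (by rw [← sq]; omega)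
    have hsum : r % k + k * (2 * k + r / k - 2 * k) = r := by
      rw [Nat.add_sub_cancel_left, Nat.mod_add_div]
    have hdes : IsDesignated k l (r % k) (2 * k + r / k) :=
      ⟨Nat.mod_lt r hk, Nat.le_add_right _ _, by omega, by rw [hsum]; exact hr⟩
    exact ⟨(⟨r % k, by have := Nat.mod_lt r hk; omega⟩, ⟨2 * k + r / k, by omega⟩),
      Finset.mem_filter.mpr ⟨Finset.mem_univ _, hdes⟩, hsum⟩

lemma card_edgeFinset_net (hl : l ≤ k ^ 2) :
    (net k l).toSimple.edgeFinset.card = 4 * k - 1 + l := by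
  rw [edgeFinset_net, Finset.card_image_of_injOn injOn_orientedEdges, orientedEdges]
  simp only [IsEdge]
  rw [Finset.filter_or, Finset.filter_or, Finset.card_union_of_disjoint,
    Finset.card_union_of_disjoint, card_filter_isPathEdge, card_filter_isSpike,
    ← designatedEdges, card_designatedEdges hl]
  · omega
  · exact Finset.disjoint_filter.mpr fun e _ h h' => by
      unfold IsSpike at h; unfold IsDesignated at h'; omega
  · refine Finset.disjoint_union_right.mpr ⟨?_, ?_⟩ <;>
    refine Finset.disjoint_filter.mpr fun e _ h h' => ?_
    · unfold IsPathEdge at h; unfold IsSpike at h'; omega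
    · unfold IsPathEdge at h; unfold IsDesignated at h'; omega

end SpikeNet

theorem eccentricity_diagram_lower_bound_general (k l : ℕ) (hk : 2 ≤ k)
    (hlk : l ≤ k ^ 2) :
    ∃ (G : WGraph (4 * k)) (L : Finset (Fin (4 * k) × Fin (4 * k))),
      G.toSimple.Connected ∧
      G.toSimple.edgeFinset.card = 4 * k - 1 + l ∧
      L.card = l ∧
      (∀ e ∈ L, G.adj e.1 e.2 = true) ∧
      (∀ e ∈ L, ∀ f ∈ L, e ≠ f → s(e.1, e.2) ≠ s(f.1, f.2)) ∧
      ∀ e ∈ L, ∀ N : ℕ, PWAffine (fun a => G.eccOn e.1 e.2 a) N → 2 * k - 2 ≤ N := by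
  refine ⟨SpikeNet.net k l, SpikeNet.designatedEdges k l, SpikeNet.connected (by omega),
    SpikeNet.card_edgeFinset_net hlk, SpikeNet.card_designatedEdges hlk,
    fun e he => SpikeNet.adj_of_isEdge (.inr (.inr (Finset.mem_filter.mp he).2)),
    fun e he f hf hne h => hne (SpikeNet.injOn_orientedEdges
      (SpikeNet.designatedEdges_subset he) (SpikeNet.designatedEdges_subset hf) h),
    fun e he N hN => ?_⟩
  have := SpikeNet.lt_of_pwAffine_eccOn (Finset.mem_filter.mp he).2 hN
  omega

/-- Lower-bound construction: for every `k ≥ 2` and `0 < l ≤ k²` there is a connected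
network with `4k` vertices and `4k-1+l` edges, together with `l` designated (pairwise
distinct) edges, such that on each designated edge the eccentricity function needs at
least `2k-2` linear pieces; hence the eccentricity diagram has `Ω(kl)` edges. -/
theorem eccentricity_diagram_lower_bound (k l : ℕ) (hk : 2 ≤ k) (hl : 0 < l)
    (hlk : l ≤ k ^ 2) :
    ∃ (G : WGraph (4 * k)) (L : Finset (Fin (4 * k) × Fin (4 * k))),
      G.toSimple.Connected ∧
      G.toSimple.edgeFinset.card = 4 * k - 1 + l ∧
      L.card = l ∧
      (∀ e ∈ L, G.adj e.1 e.2 = true) ∧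
      (∀ e ∈ L, ∀ f ∈ L, e ≠ f → s(e.1, e.2) ≠ s(f.1, f.2)) ∧
      ∀ e ∈ L, ∀ N : ℕ, PWAffine (fun a => G.eccOn e.1 e.2 a) N → 2 * k - 2 ≤ N :=
  eccentricity_diagram_lower_bound_general k l hk hlk
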